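/- Closed-form optimal power allocation (Corollary 1): Set σ_R² = σ_D² = 1 and assume u_i ≠ 0, f_i ≠ 0, P_i > 0 for all i. Define φ_i := ‖u_i‖₂ √(1+‖u_i‖₂²) / (‖f_i‖₂ √P_i), a_j := ‖f_j‖₂ √P_j / √(1+‖u_j‖₂²), b_j := ‖f_j‖₂ ‖u_j‖₂ √P_j / √(1+‖u_j‖₂²). Let π be a permutation of {1,…,R} such that φ_{π(1)} ≥ φ_{π(2)} ≥ … ≥ φ_{π(R)}, and for 1 ≤ j ≤ R set λ_j := (1 + ∑_{m=1}^j a_{π(m)}²) / (∑_{m=1}^j b_{π(m)}). Let j₀ be the smallest j ∈ {1,…,R} such that λ_j < φ_{π(j+1)}^{-1}, with the convention φ_{π(R+1)}^{-1} := +∞ (so j₀ is well defined). Define c_i^♯ := υ_i √(P_i/(‖u_i‖₂²+1)), where υ_i = 1 if i ∈ {π(1),…,π(j₀)} and υ_i = λ_{j₀} φ_i otherwise. Then c^♯ is an optimal solution of: maximize (∑_{i=1}^R c_i ‖f_i‖₂ ‖u_i‖₂)² / (∑_{i=1}^R c_i² ‖f_i‖₂² + 1) over c ∈ ℝ^R subject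 to 0 ≤ c_i ≤ √(P_i/(1+‖u_i‖₂²)) for all i. -/

import Mathlib

noncomputable section

/-- Euclidean (ℓ²) norm of a complex vector. -/
def vnorm2 {n : ℕ} (v : Fin n → ℂ) : ℝ := Real.sqrt (∑ j, ‖v j‖ ^ 2)

/-!
Write `α = ‖f‖`, `β = ‖f‖ ‖u‖`, `C = √(P / (1 + ‖u‖²))`, `N(c) = ∑ cᵢ βᵢ` and
`D(c) = ∑ cᵢ² αᵢ² + 1`, and let `L = λ_{j₀}`. The choice of `j₀` makes `c^♯` a water-filling
allocation at level `L`: the relays `π(1), …, π(j₀)` are saturated and have `L φ ≥ 1`, while the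
others have `L φ ≤ 1` and zero marginal gain `L βᵢ - αᵢ² cᵢ`. The definition of `λ_{j₀}` then
gives `D(c^♯) = L N(c^♯)`, and for every feasible `c'` the marginal gains give
`L N(c') ≤ 1 + ∑ αᵢ² cᵢ^♯ c'ᵢ`. By Cauchy–Schwarz in dimension `R + 1` the right side is at most
`√(D(c^♯) D(c'))`, whence `N(c')² / D(c') ≤ N(c^♯) / L = N(c^♯)² / D(c^♯)`.
-/

open Finset

lemma vnorm2_pos {n : ℕ} {v : Fin n → ℂ} (hv : v ≠ 0) : 0 < vnorm2 v := by
  obtain ⟨j, hj⟩ := Function.ne_iff.mp hv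
  exact Real.sqrt_pos.mpr <|
    sum_pos' (fun j _ => by positivity) ⟨j, mem_univ j, pow_pos (norm_pos_iff.mpr hj) 2⟩

lemma one_add_sum_mul_sq_le {R ι : Type*} [CommRing R] [LinearOrder R] [IsStrictOrderedRing R]
    (s : Finset ι) (x y : ι → R) :
    (1 + ∑ i ∈ s, x i * y i) ^ 2 ≤ (1 + ∑ i ∈ s, x i ^ 2) * (1 + ∑ i ∈ s, y i ^ 2) := by
  simpa [sum_insertNone] using
    sum_mul_sq_le_sq_mul_sq (insertNone s) (fun o => o.elim 1 x) (fun o => o.elim 1 y)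

lemma sq_div_le_sq_div_of_mul_le {N N' D D' L S : ℝ} (hL : 0 < L) (hD : 0 < D) (hD' : 0 < D')
    (hN' : 0 ≤ N') (hDN : D = L * N) (hlin : L * N' ≤ S) (hS : S ^ 2 ≤ D * D') :
    N' ^ 2 / D' ≤ N ^ 2 / D := by
  have hN : 0 < N := pos_of_mul_pos_right (hDN ▸ hD) hL.le
  have key : L * N' ^ 2 ≤ N * D' := by
    have : (L * N') ^ 2 ≤ L * (N * D') := by
      calc (L * N') ^ 2 ≤ S ^ 2 := pow_le_pow_left₀ (by positivity) hlin 2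
        _ ≤ _ := by rwa [hDN, mul_assoc] at hS
    nlinarith
  rw [div_le_div_iff₀ hD' hD, hDN]
  nlinarith

section Waterfilling

variable {ι : Type*} [DecidableEq ι] {α β φ C c : ι → ℝ} {T : Finset ι} {L : ℝ}

lemma waterfilling_mem_box (hC : ∀ i, 0 ≤ C i) (hφ : ∀ i, 0 ≤ φ i) (hL : 0 ≤ L)
    (hTc : ∀ i ∉ T, L * φ i ≤ 1) (hc : ∀ i, c i = (if i ∈ T then 1 else L * φ i) * C i)
    (i : ι) : 0 ≤ c i ∧ c i ≤ C i := by
  rw [hc i]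
  split_ifs with hi
  · simpa using hC i
  · exact ⟨by have := hφ i; have := hC i; positivity,
      mul_le_of_le_one_left (hC i) (hTc i hi)⟩

lemma waterfilling_denom_eq [Fintype ι] (hβ : ∀ i, β i = φ i * α i ^ 2 * C i)
    (hbudget : L * ∑ i ∈ T, β i * C i = 1 + ∑ i ∈ T, (α i * C i) ^ 2)
    (hc : ∀ i, c i = (if i ∈ T then 1 else L * φ i) * C i) :
    ∑ i, c i ^ 2 * α i ^ 2 + 1 = L * ∑ i, c i * β i := by
  have hterm : ∀ i, c i ^ 2 * α i ^ 2 - L * (c i * β i) =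
      if i ∈ T then (α i * C i) ^ 2 - L * (β i * C i) else 0 := by
    intro i
    rw [hc i, hβ i]
    split_ifs <;> ring
  have := sum_congr rfl fun i (_ : i ∈ univ) => hterm i
  rw [sum_ite_mem, univ_inter, sum_sub_distrib, sum_sub_distrib, ← mul_sum, ← mul_sum] at this
  linarith

lemma waterfilling_linear_bound [Fintype ι] (hC : ∀ i, 0 ≤ C i)
    (hβ : ∀ i, β i = φ i * α i ^ 2 * C i) (hT : ∀ i ∈ T, 1 ≤ L * φ i)
    (hbudget : L * ∑ i ∈ T, β i * C i = 1 + ∑ i ∈ T, (α i * C i) ^ 2)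
    (hc : ∀ i, c i = (if i ∈ T then 1 else L * φ i) * C i) {c' : ι → ℝ}
    (hc' : ∀ i, c' i ≤ C i) :
    L * ∑ i, c' i * β i ≤ 1 + ∑ i, (α i * c i) * (α i * c' i) := by
  have hterm : ∀ i, L * (c' i * β i) - (α i * c i) * (α i * c' i) ≤
      if i ∈ T then L * (β i * C i) - (α i * C i) ^ 2 else 0 := by
    intro i
    rw [hc i, hβ i]
    split_ifs with hi
    · have hgain : 0 ≤ α i ^ 2 * C i * (L * φ i - 1) :=
        mul_nonneg (mul_nonneg (sq_nonneg _) (hC i)) (sub_nonneg.mpr (hT i hi))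
      nlinarith [mul_le_mul_of_nonneg_left (hc' i) hgain]
    · exact le_of_eq (by ring)
  have := sum_le_sum fun i (_ : i ∈ univ) => hterm i
  rw [sum_ite_mem, univ_inter, sum_sub_distrib, sum_sub_distrib, ← mul_sum, ← mul_sum] at this
  linarith

theorem waterfilling_isOptimal [Fintype ι] (hC : ∀ i, 0 ≤ C i) (hφ : ∀ i, 0 ≤ φ i) (hL : 0 < L)
    (hβ : ∀ i, β i = φ i * α i ^ 2 * C i) (hT : ∀ i ∈ T, 1 ≤ L * φ i)
    (hTc : ∀ i ∉ T, L * φ i ≤ 1)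
    (hbudget : L * ∑ i ∈ T, β i * C i = 1 + ∑ i ∈ T, (α i * C i) ^ 2)
    (hc : ∀ i, c i = (if i ∈ T then 1 else L * φ i) * C i) :
    (∀ i, 0 ≤ c i ∧ c i ≤ C i) ∧
    ∀ c' : ι → ℝ, (∀ i, 0 ≤ c' i ∧ c' i ≤ C i) →
      (∑ i, c' i * β i) ^ 2 / (∑ i, c' i ^ 2 * α i ^ 2 + 1) ≤
        (∑ i, c i * β i) ^ 2 / (∑ i, c i ^ 2 * α i ^ 2 + 1) := by
  refine ⟨waterfilling_mem_box hC hφ hL.le hTc hc, fun c' hc' => ?_⟩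
  have hβ0 : ∀ i, 0 ≤ β i := fun i => by rw [hβ i]; have := hφ i; have := hC i; positivity
  have hCS := one_add_sum_mul_sq_le univ (fun i => α i * c i) (fun i => α i * c' i)
  simp only [mul_pow, mul_comm (α _ ^ 2)] at hCS
  exact sq_div_le_sq_div_of_mul_le hL (by positivity) (by positivity)
    (sum_nonneg fun i _ => mul_nonneg (hc' i).1 (hβ0 i)) (waterfilling_denom_eq hβ hbudget hc)
    (waterfilling_linear_bound hC hβ hT hbudget hc fun i => (hc' i).2) (hCS.trans_eq (by ring))

end Waterfilling

section SortedLevels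

variable {R : ℕ} {φ a b lam : Fin R → ℝ} {j₀ : Fin R}

lemma lam_mul_sum_Iic (hb : ∀ m, 0 < b m)
    (hlam : ∀ j, lam j = (1 + ∑ m ∈ Iic j, a m ^ 2) / ∑ m ∈ Iic j, b m) (j : Fin R) :
    lam j * ∑ m ∈ Iic j, b m = 1 + ∑ m ∈ Iic j, a m ^ 2 :=
  hlam j ▸ div_mul_cancel₀ _ (sum_pos (fun m _ => hb m) ⟨j, mem_Iic.2 le_rfl⟩).ne'

lemma inv_mul_sum_Iio_le (hb : ∀ m, 0 < b m)
    (hlam : ∀ j, lam j = (1 + ∑ m ∈ Iic j, a m ^ 2) / ∑ m ∈ Iic j, b m)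
    (hj₀min : ∀ j : Fin R, j < j₀ → ∀ h : (j : ℕ) + 1 < R, ¬ lam j < (φ ⟨(j : ℕ) + 1, h⟩)⁻¹) :
    (φ j₀)⁻¹ * ∑ m ∈ Iio j₀, b m ≤ 1 + ∑ m ∈ Iio j₀, a m ^ 2 := by
  rcases Nat.eq_zero_or_pos j₀ with h0 | hpos
  · have hempty : Iio j₀ = ∅ := by ext m; simp [Fin.lt_def, h0]
    simp [hempty]
  · set j : Fin R := ⟨j₀ - 1, by omega⟩
    have hIio : Iio j₀ = Iic j := by
      ext m; simp only [mem_Iio, mem_Iic, Fin.lt_def, Fin.le_def, j]; omega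
    have hle := hj₀min j (Fin.lt_def.2 (by simp [j]; omega)) (by simp [j]; omega)
    rw [not_lt, show (⟨j + 1, _⟩ : Fin R) = j₀ from Fin.ext (by simp [j]; omega)] at hle
    rw [hIio, ← lam_mul_sum_Iic hb hlam j]
    exact mul_le_mul_of_nonneg_right hle (sum_nonneg fun m _ => (hb m).le)

lemma inv_le_lam (hφ : ∀ m, 0 < φ m) (hb : ∀ m, 0 < b m) (hφab : ∀ m, φ m * a m ^ 2 = b m)
    (hlam : ∀ j, lam j = (1 + ∑ m ∈ Iic j, a m ^ 2) / ∑ m ∈ Iic j, b m)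
    (hj₀min : ∀ j : Fin R, j < j₀ → ∀ h : (j : ℕ) + 1 < R, ¬ lam j < (φ ⟨(j : ℕ) + 1, h⟩)⁻¹) :
    (φ j₀)⁻¹ ≤ lam j₀ := by
  have hbj : (φ j₀)⁻¹ * b j₀ = a j₀ ^ 2 := by
    rw [← hφab j₀, inv_mul_cancel_left₀ (hφ j₀).ne']
  have hB : 0 < ∑ m ∈ Iic j₀, b m := sum_pos (fun m _ => hb m) ⟨j₀, mem_Iic.2 le_rfl⟩
  -- `λ_{j₀}` is a mediant of `λ_{j₀ - 1} ≥ (φ j₀)⁻¹` and `a j₀ ^ 2 / b j₀ = (φ j₀)⁻¹`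
  rw [hlam j₀, le_div_iff₀ hB, ← Iio_insert, sum_insert notMem_Iio_self,
    sum_insert notMem_Iio_self, mul_add, hbj]
  linarith [inv_mul_sum_Iio_le hb hlam hj₀min]

lemma one_le_lam_mul_of_le (hanti : Antitone φ) (hφ : ∀ m, 0 < φ m) (hb : ∀ m, 0 < b m)
    (hφab : ∀ m, φ m * a m ^ 2 = b m)
    (hlam : ∀ j, lam j = (1 + ∑ m ∈ Iic j, a m ^ 2) / ∑ m ∈ Iic j, b m)
    (hj₀min : ∀ j : Fin R, j < j₀ → ∀ h : (j : ℕ) + 1 < R, ¬ lam j < (φ ⟨(j : ℕ) + 1, h⟩)⁻¹)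
    {m : Fin R} (hm : m ≤ j₀) : 1 ≤ lam j₀ * φ m := by
  have hinv := inv_le_lam hφ hb hφab hlam hj₀min
  have hL : 0 ≤ lam j₀ := (inv_pos.2 (hφ j₀)).le.trans hinv
  exact ((inv_le_iff_one_le_mul₀ (hφ j₀)).1 hinv).trans (mul_le_mul_of_nonneg_left (hanti hm) hL)

lemma lam_mul_le_one_of_lt (hanti : Antitone φ) (hφ : ∀ m, 0 < φ m) (hL : 0 ≤ lam j₀)
    (hj₀ : ∀ h : (j₀ : ℕ) + 1 < R, lam j₀ < (φ ⟨(j₀ : ℕ) + 1, h⟩)⁻¹)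
    {m : Fin R} (hm : j₀ < m) : lam j₀ * φ m ≤ 1 := by
  have hR : (j₀ : ℕ) + 1 < R := lt_of_le_of_lt (Fin.lt_def.1 hm) m.isLt
  have hnext : lam j₀ * φ ⟨j₀ + 1, hR⟩ < 1 := by
    simpa using (lt_inv_mul_iff₀' (hφ _)).1 (by simpa using hj₀ hR)
  have hle : (⟨j₀ + 1, hR⟩ : Fin R) ≤ m := Fin.le_def.2 hm
  exact (mul_le_mul_of_nonneg_left (hanti hle) hL).trans hnext.le

end SortedLevels

theorem waterfilling_isOptimal_of_sorted {R : ℕ} {α β φ C lam c : Fin R → ℝ}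
    {π : Equiv.Perm (Fin R)} {j₀ : Fin R} (hα : ∀ i, α i ≠ 0) (hC : ∀ i, 0 < C i)
    (hφ : ∀ i, 0 < φ i) (hβ : ∀ i, β i = φ i * α i ^ 2 * C i) (hπ : Antitone (φ ∘ π))
    (hlam : ∀ j, lam j = (1 + ∑ m ∈ Iic j, (α (π m) * C (π m)) ^ 2) /
      ∑ m ∈ Iic j, β (π m) * C (π m))
    (hj₀ : ∀ h : (j₀ : ℕ) + 1 < R, lam j₀ < (φ (π ⟨(j₀ : ℕ) + 1, h⟩))⁻¹)
    (hj₀min : ∀ j : Fin R, j < j₀ →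
      ∀ h : (j : ℕ) + 1 < R, ¬ lam j < (φ (π ⟨(j : ℕ) + 1, h⟩))⁻¹)
    (hc : ∀ i, c i = (if π.symm i ≤ j₀ then 1 else lam j₀ * φ i) * C i) :
    (∀ i, 0 ≤ c i ∧ c i ≤ C i) ∧
    ∀ c' : Fin R → ℝ, (∀ i, 0 ≤ c' i ∧ c' i ≤ C i) →
      (∑ i, c' i * β i) ^ 2 / (∑ i, c' i ^ 2 * α i ^ 2 + 1) ≤
        (∑ i, c i * β i) ^ 2 / (∑ i, c i ^ 2 * α i ^ 2 + 1) := by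
  have hb : ∀ m, 0 < β (π m) * C (π m) := fun m => by
    rw [hβ]; have := hφ (π m); have := hC (π m); have := hα (π m); positivity
  have hφab : ∀ m, (φ ∘ π) m * (α (π m) * C (π m)) ^ 2 = β (π m) * C (π m) := fun m => by
    rw [Function.comp_apply, hβ]; ring
  have hL : 0 < lam j₀ :=
    (inv_pos.2 (hφ (π j₀))).trans_le (inv_le_lam (fun m => hφ (π m)) hb hφab hlam hj₀min)
  set T := (Iic j₀).map π.toEmbedding
  have hT : ∀ i, i ∈ T ↔ π.symm i ≤ j₀ := fun i => by rw [mem_map_equiv, mem_Iic]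
  refine waterfilling_isOptimal (T := T) (fun i => (hC i).le) (fun i => (hφ i).le) hL hβ
    (fun i hi => ?_) (fun i hi => ?_) ?_ fun i => by rw [hc i, if_congr (hT i).symm rfl rfl]
  · simpa using one_le_lam_mul_of_le hπ (fun m => hφ (π m)) hb hφab hlam hj₀min ((hT i).1 hi)
  · simpa using lam_mul_le_one_of_lt hπ (fun m => hφ (π m)) hL.le hj₀
      (not_le.1 (mt (hT i).2 hi))
  · simpa [T, sum_map] using lam_mul_sum_Iic hb hlam j₀

theorem stmt1_general (R : ℕ) (M : Fin R → ℕ)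
    (u f : (i : Fin R) → Fin (M i) → ℂ)
    (P : Fin R → ℝ) (hP : ∀ i, 0 < P i)
    (hu : ∀ i, u i ≠ 0) (hf : ∀ i, f i ≠ 0)
    -- the quantities φ, a, b, λ of Corollary 1
    (φ a b lam : Fin R → ℝ)
    (hφ : ∀ i, φ i = vnorm2 (u i) * Real.sqrt (1 + (vnorm2 (u i)) ^ 2) /
        (vnorm2 (f i) * Real.sqrt (P i)))
    (ha : ∀ j, a j = vnorm2 (f j) * Real.sqrt (P j) / Real.sqrt (1 + (vnorm2 (u j)) ^ 2))
    (hb : ∀ j, b j = vnorm2 (f j) * vnorm2 (u j) * Real.sqrt (P j) /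
        Real.sqrt (1 + (vnorm2 (u j)) ^ 2))
    -- π sorts the φ's in descending order (`π m` here is `π(m+1)` in 1-based notation)
    (π : Equiv.Perm (Fin R))
    (hπ : ∀ m m' : Fin R, m ≤ m' → φ (π m') ≤ φ (π m))
    -- `lam j` here is `λ_{j+1}` of the paper (1-based index `j+1`)
    (hlam : ∀ j : Fin R, lam j =
        (1 + ∑ m ∈ Finset.Iic j, (a (π m)) ^ 2) / (∑ m ∈ Finset.Iic j, b (π m)))
    -- `j₀` is the smallest (1-based) index `j₀+1` with `λ_j < φ_{π(j+1)}⁻¹`,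
    -- with the convention `φ_{π(R+1)}⁻¹ = +∞` (the condition holds vacuously
    -- at the last index)
    (j₀ : Fin R)
    (hj₀ : ∀ h : (j₀ : ℕ) + 1 < R, lam j₀ < (φ (π ⟨(j₀ : ℕ) + 1, h⟩))⁻¹)
    (hj₀min : ∀ j : Fin R, j < j₀ →
        ∀ h : (j : ℕ) + 1 < R, ¬ lam j < (φ (π ⟨(j : ℕ) + 1, h⟩))⁻¹)
    -- the claimed optimal power allocation
    (c : Fin R → ℝ)
    (hc : ∀ i, c i =
        (if π.symm i ≤ j₀ then (1 : ℝ) else lam j₀ * φ i) *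
          Real.sqrt (P i / ((vnorm2 (u i)) ^ 2 + 1))) :
    (∀ i, 0 ≤ c i ∧ c i ≤ Real.sqrt (P i / (1 + (vnorm2 (u i)) ^ 2))) ∧
    (∀ c' : Fin R → ℝ,
      (∀ i, 0 ≤ c' i ∧ c' i ≤ Real.sqrt (P i / (1 + (vnorm2 (u i)) ^ 2))) →
      (∑ i, c' i * vnorm2 (f i) * vnorm2 (u i)) ^ 2 /
          (∑ i, (c' i) ^ 2 * (vnorm2 (f i)) ^ 2 + 1) ≤
        (∑ i, c i * vnorm2 (f i) * vnorm2 (u i)) ^ 2 /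
          (∑ i, (c i) ^ 2 * (vnorm2 (f i)) ^ 2 + 1)) := by
  have hU : ∀ i, 0 < vnorm2 (u i) := fun i => vnorm2_pos (hu i)
  have hF : ∀ i, 0 < vnorm2 (f i) := fun i => vnorm2_pos (hf i)
  have hC : ∀ i, √(P i / (1 + vnorm2 (u i) ^ 2)) = √(P i) / √(1 + vnorm2 (u i) ^ 2) :=
    fun i => Real.sqrt_div (hP i).le _
  have hβ : ∀ i, vnorm2 (f i) * vnorm2 (u i) =
      φ i * vnorm2 (f i) ^ 2 * √(P i / (1 + vnorm2 (u i) ^ 2)) := fun i => by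
    have := hF i; have := hP i
    rw [hφ i, hC i]
    field_simp
  have ha' : ∀ j, a j = vnorm2 (f j) * √(P j / (1 + vnorm2 (u j) ^ 2)) := fun j => by
    rw [ha j, hC j, mul_div_assoc]
  have hb' : ∀ j, b j = vnorm2 (f j) * vnorm2 (u j) * √(P j / (1 + vnorm2 (u j) ^ 2)) :=
    fun j => by rw [hb j, hC j, mul_div_assoc]
  simp only [ha', hb'] at hlam
  obtain ⟨hbox, hopt⟩ := waterfilling_isOptimal_of_sorted
    (β := fun i => vnorm2 (f i) * vnorm2 (u i)) (c := c)
    (fun i => (hF i).ne') (fun i => by rw [hC i]; have := hP i; positivity)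
    (fun i => by rw [hφ i]; have := hU i; have := hF i; have := hP i; positivity) hβ
    (fun m m' h => hπ m m' h) hlam hj₀ hj₀min
    (fun i => by rw [hc i, add_comm (vnorm2 (u i) ^ 2)])
  exact ⟨hbox, fun c' hc' => by simpa only [mul_assoc] using hopt c' hc'⟩

theorem stmt1 (R : ℕ) (hR : 1 ≤ R) (M : Fin R → ℕ)
    (u f : (i : Fin R) → Fin (M i) → ℂ)
    (P : Fin R → ℝ) (hP : ∀ i, 0 < P i)
    (hu : ∀ i, u i ≠ 0) (hf : ∀ i, f i ≠ 0)
    -- the quantities φ, a, b, λ of Corollary 1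
    (φ a b lam : Fin R → ℝ)
    (hφ : ∀ i, φ i = vnorm2 (u i) * Real.sqrt (1 + (vnorm2 (u i)) ^ 2) /
        (vnorm2 (f i) * Real.sqrt (P i)))
    (ha : ∀ j, a j = vnorm2 (f j) * Real.sqrt (P j) / Real.sqrt (1 + (vnorm2 (u j)) ^ 2))
    (hb : ∀ j, b j = vnorm2 (f j) * vnorm2 (u j) * Real.sqrt (P j) /
        Real.sqrt (1 + (vnorm2 (u j)) ^ 2))
    -- π sorts the φ's in descending order (`π m` here is `π(m+1)` in 1-based notation)
    (π : Equiv.Perm (Fin R))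
    (hπ : ∀ m m' : Fin R, m ≤ m' → φ (π m') ≤ φ (π m))
    -- `lam j` here is `λ_{j+1}` of the paper (1-based index `j+1`)
    (hlam : ∀ j : Fin R, lam j =
        (1 + ∑ m ∈ Finset.Iic j, (a (π m)) ^ 2) / (∑ m ∈ Finset.Iic j, b (π m)))
    -- `j₀` is the smallest (1-based) index `j₀+1` with `λ_j < φ_{π(j+1)}⁻¹`,
    -- with the convention `φ_{π(R+1)}⁻¹ = +∞` (the condition holds vacuously
    -- at the last index)
    (j₀ : Fin R)
    (hj₀ : ∀ h : (j₀ : ℕ) + 1 < R, lam j₀ < (φ (π ⟨(j₀ : ℕ) + 1, h⟩))⁻¹)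
    (hj₀min : ∀ j : Fin R, j < j₀ →
        ∀ h : (j : ℕ) + 1 < R, ¬ lam j < (φ (π ⟨(j : ℕ) + 1, h⟩))⁻¹)
    -- the claimed optimal power allocation
    (c : Fin R → ℝ)
    (hc : ∀ i, c i =
        (if π.symm i ≤ j₀ then (1 : ℝ) else lam j₀ * φ i) *
          Real.sqrt (P i / ((vnorm2 (u i)) ^ 2 + 1))) :
    (∀ i, 0 ≤ c i ∧ c i ≤ Real.sqrt (P i / (1 + (vnorm2 (u i)) ^ 2))) ∧
    (∀ c' : Fin R → ℝ,
      (∀ i, 0 ≤ c' i ∧ c' i ≤ Real.sqrt (P i / (1 + (vnorm2 (u i)) ^ 2))) →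
      (∑ i, c' i * vnorm2 (f i) * vnorm2 (u i)) ^ 2 /
          (∑ i, (c' i) ^ 2 * (vnorm2 (f i)) ^ 2 + 1) ≤
        (∑ i, c i * vnorm2 (f i) * vnorm2 (u i)) ^ 2 /
          (∑ i, (c i) ^ 2 * (vnorm2 (f i)) ^ 2 + 1)) :=
  stmt1_general R M u f P hP hu hf φ a b lam hφ ha hb π hπ hlam j₀ hj₀ hj₀min c hc
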